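/- Let S > 0 and r > 0. Any twice continuously differentiable function u₀ : ℝ → ℝ satisfying u₀''(x) + S·f(u₀(x)) + (2S/r)(2u₀(x)−1)(u₀'(x))² = 0 for all x ∈ ℝ, together with lim_{x→−∞} u₀(x) = 1 and lim_{x→+∞} u₀(x) = 0, satisfies 0 < u₀(x) < 1 for all x ∈ ℝ and lim_{x→−∞} u₀'(x) = lim_{x→+∞} u₀'(x) = 0. -/

import Mathlib

open Real Filter Topology

noncomputable def fpoly (u : ℝ) : ℝ := u * (2 * u - 1) * (1 - u)

/-!
Let `c = 2S/r`. With `P(v) = exp (c (v² - v))` (`weight`), `G(v) = ∫₀ᵛ P² f` (`potential`) and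
`E = P(u)² u'² / 2 + S G(u)` (`energy`), `P(u)` is an integrating factor,
`(P(u) u')' = -S P(u) f(u)`, so `E` is conserved along solutions. As `u`
converges at `+∞`, the mean value theorem gives points arbitrarily far out where `u'` is small,
which forces `E = 0`. Then `G(u) = 0` at every critical point of `u`; since `G < 0` outside
`[0, 1]`, neither a global maximum above `1` nor a global minimum below `0` can exist. On `[0, 1]`
one has `G(v) ≥ -C min(v, 1 - v)²`, so `E = 0` yields `|u'| ≤ K u` and `|u'| ≤ K (1 - u)`, and
by Grönwall `u` touching `0` or `1` would be constant, contradicting the boundary conditions.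
Finally `E = 0` expresses `u'²` through `u`, and that expression vanishes at `u = 0` and `u = 1`.
-/

open Set intervalIntegral

@[fun_prop]
lemma continuous_fpoly : Continuous fpoly := by
  unfold fpoly; fun_prop

lemma fpoly_one_sub (t : ℝ) : fpoly (1 - t) = -fpoly t := by
  unfold fpoly; ring

lemma fpoly_pos_of_neg {t : ℝ} (ht : t < 0) : 0 < fpoly t :=
  mul_pos (mul_pos_of_neg_of_neg ht (by linarith)) (by linarith)

lemma neg_le_fpoly {t : ℝ} (ht : t ≤ 3 / 2) : -t ≤ fpoly t := by
  have hfactor : fpoly t + t = t ^ 2 * (3 - 2 * t) := by unfold fpoly; ring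
  linarith [mul_nonneg (sq_nonneg t) (by linarith : (0 : ℝ) ≤ 3 - 2 * t)]

noncomputable def weight (c s : ℝ) : ℝ := exp (c * (s ^ 2 - s))

lemma weight_pos (c s : ℝ) : 0 < weight c s := exp_pos _

@[fun_prop]
lemma continuous_weight (c : ℝ) : Continuous (weight c) := by
  unfold weight; fun_prop

lemma hasDerivAt_weight (c s : ℝ) :
    HasDerivAt (weight c) (c * (2 * s - 1) * weight c s) s := by
  have h : HasDerivAt (fun s : ℝ => c * (s ^ 2 - s)) (c * (2 * s - 1)) s := by
    simpa using (((hasDerivAt_pow 2 s).sub (hasDerivAt_id s)).const_mul c)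
  exact h.exp.congr_deriv (by rw [weight]; ring)

lemma weight_one_sub (c s : ℝ) : weight c (1 - s) = weight c s := by
  unfold weight; ring_nf

lemma weight_sq_mem_Icc (c : ℝ) {s : ℝ} (hs : s ∈ Icc 0 1) :
    weight c s ^ 2 ∈ Icc (exp (-(|c| / 2))) (exp (|c| / 2)) := by
  have hquad : |s ^ 2 - s| ≤ 1 / 4 :=
    abs_le.2 ⟨by nlinarith [sq_nonneg (s - 1 / 2)], by nlinarith [hs.1, hs.2]⟩
  have hexp := abs_le.1 <| show |c * (s ^ 2 - s) + c * (s ^ 2 - s)| ≤ |c| / 2 by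
    rw [← two_mul, abs_mul, abs_mul, abs_two]
    nlinarith [abs_nonneg c]
  rw [weight, sq, ← exp_add]
  exact ⟨exp_le_exp.2 hexp.1, exp_le_exp.2 hexp.2⟩

noncomputable def potential (c v : ℝ) : ℝ := ∫ t in (0 : ℝ)..v, weight c t ^ 2 * fpoly t

section Potential

variable (c : ℝ)

lemma continuous_weight_sq_mul_fpoly : Continuous fun t => weight c t ^ 2 * fpoly t := by
  fun_prop

lemma hasDerivAt_potential (v : ℝ) : HasDerivAt (potential c) (weight c v ^ 2 * fpoly v) v :=
  (continuous_weight_sq_mul_fpoly c).integral_hasStrictDerivAt 0 v |>.hasDerivAt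

@[fun_prop]
lemma continuous_potential : Continuous (potential c) :=
  continuous_iff_continuousAt.2 fun v => (hasDerivAt_potential c v).continuousAt

@[simp]
lemma potential_zero : potential c 0 = 0 := integral_same

lemma potential_one_sub_eq_add (v : ℝ) : potential c (1 - v) = potential c 1 + potential c v := by
  have hsym : ∫ t in (0 : ℝ)..v, weight c (1 - t) ^ 2 * fpoly (1 - t) = -potential c v := by
    simp only [weight_one_sub, fpoly_one_sub, mul_neg, integral_neg, potential]
  rw [integral_comp_sub_left (fun t => weight c t ^ 2 * fpoly t), sub_zero] at hsym
  have hint := (continuous_weight_sq_mul_fpoly c).intervalIntegrable (μ := MeasureTheory.volume)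
  rw [potential, potential, ← integral_add_adjacent_intervals (hint 0 (1 - v)) (hint (1 - v) 1),
    hsym, potential]
  ring

@[simp]
lemma potential_one : potential c 1 = 0 := by
  have := potential_one_sub_eq_add c 1
  rw [sub_self, potential_zero] at this
  linarith

lemma potential_one_sub (v : ℝ) : potential c (1 - v) = potential c v := by
  rw [potential_one_sub_eq_add, potential_one, zero_add]

variable {c}

lemma potential_neg_of_neg {v : ℝ} (hv : v < 0) : potential c v < 0 := by
  rw [potential, integral_symm, neg_neg_iff_pos]
  exact intervalIntegral_pos_of_pos_on ((continuous_weight_sq_mul_fpoly c).intervalIntegrable _ _)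
    (fun t ht => mul_pos (pow_pos (weight_pos c t) 2) (fpoly_pos_of_neg ht.2)) hv

lemma potential_neg_of_one_lt {v : ℝ} (hv : 1 < v) : potential c v < 0 := by
  rw [← sub_sub_cancel 1 v, potential_one_sub]
  exact potential_neg_of_neg (by linarith)

lemma neg_le_potential {v : ℝ} (hv : v ∈ Icc 0 1) :
    -(exp (|c| / 2) * v ^ 2 / 2) ≤ potential c v := by
  have hpoint : ∀ t ∈ Icc 0 v, -(exp (|c| / 2) * t) ≤ weight c t ^ 2 * fpoly t := by
    intro t ht
    have hw := (weight_sq_mem_Icc c ⟨ht.1, ht.2.trans hv.2⟩).2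
    calc -(exp (|c| / 2) * t) ≤ -(weight c t ^ 2 * t) := by nlinarith [ht.1]
      _ ≤ weight c t ^ 2 * fpoly t := by
        nlinarith [neg_le_fpoly (by linarith [ht.2, hv.2] : t ≤ 3 / 2), sq_nonneg (weight c t)]
  have hmono := integral_mono_on (μ := MeasureTheory.volume) hv.1
    ((by fun_prop : Continuous fun t => -(exp (|c| / 2) * t)).intervalIntegrable _ _)
    ((continuous_weight_sq_mul_fpoly c).intervalIntegrable _ _) hpoint
  rw [integral_neg, integral_const_mul, integral_id] at hmono
  rw [potential]
  linarith

lemma neg_le_potential_one_sub {v : ℝ} (hv : v ∈ Icc 0 1) :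
    -(exp (|c| / 2) * (1 - v) ^ 2 / 2) ≤ potential c v := by
  rw [← potential_one_sub]
  exact neg_le_potential ⟨by linarith [hv.2], by linarith [hv.1]⟩

end Potential

lemma eq_zero_of_tendsto_sq_deriv {u : ℝ → ℝ} (hu : Differentiable ℝ u) {ℓ a : ℝ}
    (hℓ : Tendsto u atTop (𝓝 ℓ)) (ha : Tendsto (fun x => deriv u x ^ 2) atTop (𝓝 a)) : a = 0 := by
  have hmvt : ∀ x, ∃ ξ ∈ Ioo x (x + 1), deriv u ξ = (u (x + 1) - u x) / (x + 1 - x) := fun x =>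
    exists_deriv_eq_slope u (lt_add_one x) hu.continuous.continuousOn hu.differentiableOn
  choose ξ hξ hslope using hmvt
  have hξ_top : Tendsto ξ atTop atTop := tendsto_atTop_mono (fun x => (hξ x).1.le) tendsto_id
  have hincr : Tendsto (fun x => u (x + 1) - u x) atTop (𝓝 0) := by
    simpa using (hℓ.comp (tendsto_atTop_add_const_right _ 1 tendsto_id)).sub hℓ
  have hzero : Tendsto (fun x => deriv u (ξ x) ^ 2) atTop (𝓝 0) := by
    simpa [hslope] using hincr.pow 2
  exact tendsto_nhds_unique (ha.comp hξ_top) hzero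

lemma exists_le_deriv_eq_zero {u : ℝ → ℝ} (hu : Continuous u) {a b y : ℝ}
    (ha : Tendsto u atBot (𝓝 a)) (hb : Tendsto u atTop (𝓝 b)) (hay : a < u y) (hby : b < u y) :
    ∃ x, u y ≤ u x ∧ deriv u x = 0 := by
  obtain ⟨x, hx⟩ := hu.exists_forall_ge' y <| by
    rw [cocompact_eq_atBot_atTop]
    exact eventually_sup.2
      ⟨ha.eventually (eventually_le_nhds hay), hb.eventually (eventually_le_nhds hby)⟩
  exact ⟨x, hx y, IsLocalMax.deriv_eq_zero (Eventually.of_forall hx)⟩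

lemma eq_zero_of_norm_deriv_le_mul_norm {E : Type*} [NormedAddCommGroup E] [NormedSpace ℝ E]
    {f f' : ℝ → E} {K a : ℝ} (hf : ∀ t, HasDerivAt f (f' t) t) (hK : ∀ t, ‖f' t‖ ≤ K * ‖f t‖)
    (ha : f a = 0) (t : ℝ) : f t = 0 := by
  have forward : ∀ {g g' : ℝ → E} {b : ℝ}, (∀ t, HasDerivAt g (g' t) t) →
      (∀ t, ‖g' t‖ ≤ K * ‖g t‖) → g b = 0 → ∀ t, b ≤ t → g t = 0 :=
    fun hg hgK hb t hbt => eq_zero_of_abs_deriv_le_mul_abs_self_of_eq_zero_right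
      (fun s _ => (hg s).continuousAt.continuousWithinAt) (fun s _ => (hg s).hasDerivWithinAt) hb
      (fun s _ => hgK s) t ⟨hbt, le_rfl⟩
  rcases le_total a t with hat | hta
  · exact forward hf hK ha t hat
  · have hrefl : ∀ s, HasDerivAt (fun s => f (-s)) (-f' (-s)) s := fun s =>
      ((hf (-s)).scomp s (hasDerivAt_neg s)).congr_deriv (neg_one_smul ℝ _)
    simpa using
      forward hrefl (fun s => by simpa using hK (-s)) (by simpa using ha) (-t) (neg_le_neg hta)

lemma ne_zero_of_abs_deriv_le_mul_abs {w : ℝ → ℝ} {K : ℝ} (hw : Differentiable ℝ w)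
    (hK : ∀ t, |deriv w t| ≤ K * |w t|) {l : Filter ℝ} [l.NeBot] {b : ℝ}
    (hb : Tendsto w l (𝓝 b)) (hb0 : b ≠ 0) (t : ℝ) : w t ≠ 0 := by
  intro ht
  have hw0 : w = 0 := funext (eq_zero_of_norm_deriv_le_mul_norm (fun s => (hw s).hasDerivAt) hK ht)
  rw [hw0] at hb
  exact hb0 (tendsto_nhds_unique hb tendsto_const_nhds)

noncomputable def energy (S c v p : ℝ) : ℝ := weight c v ^ 2 * p ^ 2 / 2 + S * potential c v

section Energy

variable {S c : ℝ}

lemma potential_eq_zero_of_energy_eq_zero (hS : S ≠ 0) {v : ℝ} (h : energy S c v 0 = 0) :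
    potential c v = 0 := by
  simpa [energy, hS] using h

lemma abs_le_of_energy_eq_zero (hS : 0 ≤ S) {v p w : ℝ} (hv : v ∈ Icc 0 1)
    (hE : energy S c v p = 0) (hw : -(exp (|c| / 2) * w ^ 2 / 2) ≤ potential c v) :
    |p| ≤ √(S * exp |c|) * |w| := by
  have hweight := (weight_sq_mem_Icc c hv).1
  have hsq : exp (-(|c| / 2)) * p ^ 2 ≤ S * exp (|c| / 2) * w ^ 2 := by
    rw [energy] at hE
    nlinarith [mul_le_mul_of_nonneg_right hweight (sq_nonneg p), mul_le_mul_of_nonneg_left hw hS]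
  rw [← sqrt_sq_eq_abs w, ← sqrt_mul (by positivity)]
  apply abs_le_sqrt
  calc p ^ 2 = exp (|c| / 2) * (exp (-(|c| / 2)) * p ^ 2) := by
        rw [← mul_assoc, ← exp_add, add_neg_cancel, exp_zero, one_mul]
    _ ≤ exp (|c| / 2) * (S * exp (|c| / 2) * w ^ 2) :=
        mul_le_mul_of_nonneg_left hsq (exp_pos _).le
    _ = S * exp |c| * w ^ 2 := by rw [← add_halves |c|, exp_add]; ring_nf

variable {u : ℝ → ℝ}

lemma hasDerivAt_energy (hu : Differentiable ℝ u) (hu' : Differentiable ℝ (deriv u))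
    (hode : ∀ x, deriv (deriv u) x + S * fpoly (u x) + c * (2 * u x - 1) * deriv u x ^ 2 = 0)
    (x : ℝ) : HasDerivAt (fun x => energy S c (u x) (deriv u x)) 0 x := by
  have hweight := (hasDerivAt_weight c (u x)).comp x (hu x).hasDerivAt
  have hpot := (hasDerivAt_potential c (u x)).comp x (hu x).hasDerivAt
  refine ((((hweight.pow 2).mul ((hu' x).hasDerivAt.pow 2)).div_const 2).add
    (hpot.const_mul S)).congr_deriv ?_
  simp only [Function.comp_apply, Pi.pow_apply]
  linear_combination weight c (u x) ^ 2 * deriv u x * hode x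

lemma tendsto_sq_deriv_of_energy_eq {E : ℝ} (hE : ∀ x, energy S c (u x) (deriv u x) = E)
    {l : Filter ℝ} {ℓ : ℝ} (hℓ : Tendsto u l (𝓝 ℓ)) :
    Tendsto (fun x => deriv u x ^ 2) l (𝓝 (2 * (E - S * potential c ℓ) / weight c ℓ ^ 2)) := by
  have hsq : ∀ x, deriv u x ^ 2 = 2 * (E - S * potential c (u x)) / weight c (u x) ^ 2 := by
    intro x
    rw [← hE x, energy]
    field_simp [(weight_pos c (u x)).ne']
    ring
  have hcont : Continuous fun v => 2 * (E - S * potential c v) / weight c v ^ 2 :=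
    Continuous.div (by fun_prop) (by fun_prop) fun v => pow_ne_zero 2 (weight_pos c v).ne'
  exact ((hcont.tendsto ℓ).comp hℓ).congr fun x => (hsq x).symm

lemma energy_eq_zero (hu : Differentiable ℝ u) (hu' : Differentiable ℝ (deriv u))
    (hode : ∀ x, deriv (deriv u) x + S * fpoly (u x) + c * (2 * u x - 1) * deriv u x ^ 2 = 0)
    (hlim : Tendsto u atTop (𝓝 0)) (x : ℝ) : energy S c (u x) (deriv u x) = 0 := by
  have hconst : ∀ y, energy S c (u y) (deriv u y) = energy S c (u 0) (deriv u 0) :=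
    fun y => is_const_of_deriv_eq_zero (fun y => (hasDerivAt_energy hu hu' hode y).differentiableAt)
      (fun y => (hasDerivAt_energy hu hu' hode y).deriv) y 0
  have h := eq_zero_of_tendsto_sq_deriv hu hlim (tendsto_sq_deriv_of_energy_eq hconst hlim)
  simp [weight] at h
  rw [hconst x, h]

lemma mem_Icc_of_energy_eq_zero (hS : S ≠ 0) (hu : Continuous u)
    (hE : ∀ x, energy S c (u x) (deriv u x) = 0)
    (h1 : Tendsto u atBot (𝓝 1)) (h0 : Tendsto u atTop (𝓝 0)) (x : ℝ) : u x ∈ Icc 0 1 := by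
  have hcrit : ∀ y, deriv u y = 0 → potential c (u y) = 0 := fun y hy =>
    potential_eq_zero_of_energy_eq_zero hS (hy ▸ hE y)
  constructor
  · by_contra! hx
    obtain ⟨y, hxy, hy⟩ := exists_le_deriv_eq_zero (u := fun t => -u t) (y := x)
      hu.neg h1.neg h0.neg (by linarith) (by linarith)
    rw [deriv.fun_neg, neg_eq_zero] at hy
    exact (potential_neg_of_neg (by linarith)).ne (hcrit y hy)
  · by_contra! hx
    obtain ⟨y, hxy, hy⟩ := exists_le_deriv_eq_zero (y := x) hu h1 h0 (by linarith) (by linarith)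
    exact (potential_neg_of_one_lt (by linarith)).ne (hcrit y hy)

lemma mem_Ioo_of_energy_eq_zero (hS : 0 ≤ S) (hu : Differentiable ℝ u)
    (hE : ∀ x, energy S c (u x) (deriv u x) = 0) (hIcc : ∀ x, u x ∈ Icc 0 1)
    (h1 : Tendsto u atBot (𝓝 1)) (h0 : Tendsto u atTop (𝓝 0)) (x : ℝ) : u x ∈ Ioo 0 1 := by
  have hK : ∀ t, |deriv u t| ≤ √(S * exp |c|) * |u t| := fun t =>
    abs_le_of_energy_eq_zero hS (hIcc t) (hE t) (neg_le_potential (hIcc t))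
  have hK' : ∀ t, |deriv (fun t => 1 - u t) t| ≤ √(S * exp |c|) * |1 - u t| := fun t => by
    rw [deriv_const_sub, abs_neg]
    exact abs_le_of_energy_eq_zero hS (hIcc t) (hE t) (neg_le_potential_one_sub (hIcc t))
  have hne0 := ne_zero_of_abs_deriv_le_mul_abs hu hK h1 one_ne_zero x
  have hne1 := ne_zero_of_abs_deriv_le_mul_abs ((differentiable_const 1).sub hu) hK'
    (h0.const_sub 1) (by norm_num) x
  exact ⟨(hIcc x).1.lt_of_ne' hne0, (hIcc x).2.lt_of_ne (sub_ne_zero.1 hne1).symm⟩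

lemma tendsto_deriv_of_energy_eq_zero (hE : ∀ x, energy S c (u x) (deriv u x) = 0)
    {l : Filter ℝ} {ℓ : ℝ} (hℓ : Tendsto u l (𝓝 ℓ)) (hpot : potential c ℓ = 0) :
    Tendsto (deriv u) l (𝓝 0) := by
  have hsq := tendsto_sq_deriv_of_energy_eq hE hℓ
  rw [hpot, mul_zero, sub_zero, mul_zero, zero_div] at hsq
  rw [tendsto_zero_iff_abs_tendsto_zero]
  simpa [sqrt_sq_eq_abs, Function.comp_def] using hsq.sqrt

end Energy

theorem standing_wave_a_priori (S r : ℝ) (hS : 0 < S)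
    (u₀ : ℝ → ℝ) (hu : ContDiff ℝ 2 u₀)
    (hode : ∀ x : ℝ, deriv (deriv u₀) x + S * fpoly (u₀ x)
      + (2 * S / r) * (2 * u₀ x - 1) * (deriv u₀ x) ^ 2 = 0)
    (hlim1 : Tendsto u₀ atBot (𝓝 1)) (hlim0 : Tendsto u₀ atTop (𝓝 0)) :
    (∀ x : ℝ, 0 < u₀ x ∧ u₀ x < 1) ∧
      Tendsto (deriv u₀) atBot (𝓝 0) ∧ Tendsto (deriv u₀) atTop (𝓝 0) := by
  have hu₁ : Differentiable ℝ u₀ := hu.differentiable two_ne_zero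
  have hE := energy_eq_zero hu₁ hu.differentiable_deriv_two hode hlim0
  have hIcc := mem_Icc_of_energy_eq_zero hS.ne' hu₁.continuous hE hlim1 hlim0
  exact ⟨mem_Ioo_of_energy_eq_zero hS.le hu₁ hE hIcc hlim1 hlim0,
    tendsto_deriv_of_energy_eq_zero hE hlim1 (potential_one _),
    tendsto_deriv_of_energy_eq_zero hE hlim0 (potential_zero _)⟩
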